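/- Let ρ, ρ_prev : ℝ³ → ℝ, let x₀ ∈ ℝ³, let v ∈ ℝ³, d ∈ ℝ, and τ > 0. Assume: ρ is differentiable at x₀; x₀ is a local minimizer of ρ; ρ(x₀) ≥ 0; ρ_prev(x₀) > 0; and the discrete continuity equation holds at x₀, namely ρ(x₀) − ρ_prev(x₀) = −τ·( Dρ(x₀)(v) + ρ(x₀)·d ), where Dρ(x₀) is the Fréchet derivative of ρ at x₀ (here v plays the role of the velocity and d of its divergence at x₀). Then ρ(x₀) > 0. -/

import Mathlib

theorem IsLocalMin.mul_one_add_eq_of_discrete_continuity {E : Type*} [NormedAddCommGroup E]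
    [NormedSpace ℝ E] {ρ : E → ℝ} {D : E →L[ℝ] ℝ} {x₀ v : E} {p d τ : ℝ}
    (hmin : IsLocalMin ρ x₀) (hdiff : HasFDerivAt ρ D x₀)
    (heq : ρ x₀ - p = -τ * (D v + ρ x₀ * d)) :
    ρ x₀ * (1 + τ * d) = p := by
  have hD : D = 0 := hmin.hasFDerivAt_eq_zero hdiff
  rw [hD, zero_apply] at heq
  linarith

theorem discrete_density_positive_general
    (ρ ρprev : EuclideanSpace ℝ (Fin 3) → ℝ) (x₀ : EuclideanSpace ℝ (Fin 3))
    (D : EuclideanSpace ℝ (Fin 3) →L[ℝ] ℝ) (hdiff : HasFDerivAt ρ D x₀)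
    (hmin : IsLocalMin ρ x₀)
    (hρ0 : 0 ≤ ρ x₀) (hρprev : 0 < ρprev x₀)
    (v : EuclideanSpace ℝ (Fin 3)) (d τ : ℝ)
    (heq : ρ x₀ - ρprev x₀ = -τ * (D v + ρ x₀ * d)) :
    0 < ρ x₀ := by
  have hbalance := hmin.mul_one_add_eq_of_discrete_continuity hdiff heq
  refine hρ0.lt_of_ne fun hzero => hρprev.ne' ?_
  rw [← hbalance, ← hzero, zero_mul]

/-- (Positivity of the discrete mass density via a maximum principle.)
Let `ρ, ρ_prev : ℝ³ → ℝ`, let `x₀` be a local minimizer of `ρ` at which `ρ` is differentiable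
with Fréchet derivative `D`, assume `ρ(x₀) ≥ 0`, `ρ_prev(x₀) > 0`, and the discrete continuity
equation `ρ(x₀) − ρ_prev(x₀) = −τ·(D v + ρ(x₀)·d)` with `τ > 0` (`v` the velocity and `d` its
divergence at `x₀`).  Then `ρ(x₀) > 0`. -/
theorem discrete_density_positive
    (ρ ρprev : EuclideanSpace ℝ (Fin 3) → ℝ) (x₀ : EuclideanSpace ℝ (Fin 3))
    (D : EuclideanSpace ℝ (Fin 3) →L[ℝ] ℝ) (hdiff : HasFDerivAt ρ D x₀)
    (hmin : IsLocalMin ρ x₀)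
    (hρ0 : 0 ≤ ρ x₀) (hρprev : 0 < ρprev x₀)
    (v : EuclideanSpace ℝ (Fin 3)) (d τ : ℝ) (hτ : 0 < τ)
    (heq : ρ x₀ - ρprev x₀ = -τ * (D v + ρ x₀ * d)) :
    0 < ρ x₀ :=
  discrete_density_positive_general ρ ρprev x₀ D hdiff hmin hρ0 hρprev v d τ heq
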